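/- Let F', F_t, F_{t−1} be {1,2}-valued random variables such that the survey hypothesis F' is conditionally independent of F_t given Y and conditionally independent of F_{t−1} given Y, and F' is Bayesian informative (1 − FNR(F') − FPR(F') > 0). Then the expected market payment for closing the market with F' satisfies S̄(F_t, F') − S̄(F_{t−1}, F') = (1 − FNR(F') − FPR(F')) · (S̄(F_t, Y) − S̄(F_{t−1}, Y)); in particular, the payment is positive (respectively zero, negative) exactly when the contribution improves (respectively ties, degrades) the expected score measured against the ground truth, so closing the market with the crowdsourced survey hypothesis is incentive compatible. -/

import Mathlib

/-!
For `{1,2}`-valued labels the CA score is twice the covariance of the indicators of the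
label `1`: `S̄(F,G) = 2 Δ(F,G)(1,1)`. Conditioning on `Y`, conditional independence gives
`ℙ(F=1, F'=1) = Σ_y ℙ(F=1, Y=y) ℙ(F'=1 ∣ Y=y)`, and a short computation turns this into
`Δ(F,F')(1,1) = (ℙ(F'=1 ∣ Y=1) − ℙ(F'=1 ∣ Y=2)) · Δ(F,Y)(1,1)`, whose factor is
`1 − FNR(F') − FPR(F')`. The payment is thus a positive multiple of the improvement measured
against the ground truth.
-/

open MeasureTheory

/-- Probability of an event, as a real number. -/
noncomputable def pr {Ω : Type*} [MeasurableSpace Ω] (μ : Measure Ω) (s : Set Ω) : ℝ :=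
  (μ s).toReal

/-- A `{1,2}`-valued random label. -/
def IsBinaryLabel {Ω : Type*} (F : Ω → ℕ) : Prop :=
  ∀ ω, F ω = 1 ∨ F ω = 2

/-- False negative rate: `FNR(F) = ℙ(F=2 ∣ Y=1)`. -/
noncomputable def fnr {Ω : Type*} [MeasurableSpace Ω] (μ : Measure Ω) (F Y : Ω → ℕ) : ℝ :=
  pr μ {ω | F ω = 2 ∧ Y ω = 1} / pr μ {ω | Y ω = 1}

/-- False positive rate: `FPR(F) = ℙ(F=1 ∣ Y=2)`. -/
noncomputable def fpr {Ω : Type*} [MeasurableSpace Ω] (μ : Measure Ω) (F Y : Ω → ℕ) : ℝ :=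
  pr μ {ω | F ω = 1 ∧ Y ω = 2} / pr μ {ω | Y ω = 2}

/-- The Correlated Agreement correlation matrix:
`Δ(F,G)(k,l) = ℙ(F=k, G=l) − ℙ(F=k)·ℙ(G=l)`. -/
noncomputable def caDelta {Ω : Type*} [MeasurableSpace Ω] (μ : Measure Ω)
    (F G : Ω → ℕ) (k l : ℕ) : ℝ :=
  pr μ {ω | F ω = k ∧ G ω = l} - pr μ {ω | F ω = k} * pr μ {ω | G ω = l}

/-- The expected Correlated Agreement score of `F` against `G`:
`S̄(F,G) = ℙ(F = G) − ℙ(F=1)ℙ(G=1) − ℙ(F=2)ℙ(G=2)`. -/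
noncomputable def caScore {Ω : Type*} [MeasurableSpace Ω] (μ : Measure Ω)
    (F G : Ω → ℕ) : ℝ :=
  pr μ {ω | F ω = G ω} - pr μ {ω | F ω = 1} * pr μ {ω | G ω = 1}
    - pr μ {ω | F ω = 2} * pr μ {ω | G ω = 2}

/-- `F` and `G` are conditionally independent given `Y`:
`ℙ(F=k, G=l ∣ Y=y) = ℙ(F=k ∣ Y=y)·ℙ(G=l ∣ Y=y)` for all `k,l,y ∈ {1,2}`. -/
def CondIndepGiven {Ω : Type*} [MeasurableSpace Ω] (μ : Measure Ω)
    (F G Y : Ω → ℕ) : Prop :=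
  ∀ k l y : ℕ, k ∈ ({1, 2} : Set ℕ) → l ∈ ({1, 2} : Set ℕ) → y ∈ ({1, 2} : Set ℕ) →
    pr μ {ω | F ω = k ∧ G ω = l ∧ Y ω = y} / pr μ {ω | Y ω = y} =
      (pr μ {ω | F ω = k ∧ Y ω = y} / pr μ {ω | Y ω = y}) *
        (pr μ {ω | G ω = l ∧ Y ω = y} / pr μ {ω | Y ω = y})

section BinaryLabels

variable {Ω : Type*} [MeasurableSpace Ω] (μ : Measure Ω)

lemma pr_eq_pr_and_add_pr_and [IsFiniteMeasure μ] {G : Ω → ℕ} (hG : Measurable G)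
    (hGbin : IsBinaryLabel G) (P : Ω → Prop) :
    pr μ {ω | P ω} = pr μ {ω | P ω ∧ G ω = 1} + pr μ {ω | P ω ∧ G ω = 2} := by
  have hdiff : {ω | P ω ∧ G ω = 2} = {ω | P ω} \ {ω | G ω = 1} := by
    ext ω
    rcases hGbin ω with h | h <;> simp [h]
  rw [hdiff]
  exact (measureReal_inter_add_sdiff₀ (hG (measurableSet_singleton 1)).nullMeasurableSet).symm

lemma pr_eq_pr_and_add_pr_and' [IsFiniteMeasure μ] {G : Ω → ℕ} (hG : Measurable G)
    (hGbin : IsBinaryLabel G) (P : Ω → Prop) :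
    pr μ {ω | P ω} = pr μ {ω | G ω = 1 ∧ P ω} + pr μ {ω | G ω = 2 ∧ P ω} := by
  simpa only [and_comm] using pr_eq_pr_and_add_pr_and μ hG hGbin P

lemma pr_eq_two_eq_one_sub [IsProbabilityMeasure μ] {G : Ω → ℕ} (hG : Measurable G)
    (hGbin : IsBinaryLabel G) :
    pr μ {ω | G ω = 2} = 1 - pr μ {ω | G ω = 1} := by
  have hcompl : {ω | G ω = 2} = {ω | G ω = 1}ᶜ := by
    ext ω
    rcases hGbin ω with h | h <;> simp [h]
  rw [hcompl]
  exact probReal_compl_eq_one_sub (hG (measurableSet_singleton 1))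

lemma pr_and_eq_mul_div [IsFiniteMeasure μ] (P : Ω → Prop) (Y : Ω → ℕ) (y : ℕ) :
    pr μ {ω | P ω ∧ Y ω = y} =
      pr μ {ω | Y ω = y} * (pr μ {ω | P ω ∧ Y ω = y} / pr μ {ω | Y ω = y}) := by
  rcases eq_or_ne (pr μ {ω | Y ω = y}) 0 with h | h
  · rw [h, zero_mul]
    exact measureReal_mono_null (fun ω hω => hω.2) h
  · rw [mul_div_cancel₀ _ h]

lemma pr_agree_eq_add [IsFiniteMeasure μ] {F G : Ω → ℕ} (hG : Measurable G)
    (hFbin : IsBinaryLabel F) (hGbin : IsBinaryLabel G) :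
    pr μ {ω | F ω = G ω} =
      pr μ {ω | F ω = 1 ∧ G ω = 1} + pr μ {ω | F ω = 2 ∧ G ω = 2} := by
  rw [pr_eq_pr_and_add_pr_and μ hG hGbin]
  congr 2 <;> ext ω <;>
    rcases hFbin ω with hF | hF <;> rcases hGbin ω with hG | hG <;> simp [hF, hG]

lemma caScore_eq_two_mul_caDelta [IsProbabilityMeasure μ] {F G : Ω → ℕ} (hF : Measurable F)
    (hG : Measurable G) (hFbin : IsBinaryLabel F) (hGbin : IsBinaryLabel G) :
    caScore μ F G = 2 * caDelta μ F G 1 1 := by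
  have hF2 := pr_eq_two_eq_one_sub μ hF hFbin
  have hG2 := pr_eq_two_eq_one_sub μ hG hGbin
  have hF2G := pr_eq_pr_and_add_pr_and μ hG hGbin (fun ω => F ω = 2)
  have hG1F := pr_eq_pr_and_add_pr_and' μ hF hFbin (fun ω => G ω = 1)
  rw [caScore, caDelta, pr_agree_eq_add μ hG hFbin hGbin, hF2, hG2]
  linear_combination hG1F - hF2G + hF2

end BinaryLabels

section ConditionalIndependence

variable {Ω : Type*} [MeasurableSpace Ω] {μ : Measure Ω} {F G Y : Ω → ℕ}

lemma CondIndepGiven.pr_and_and_eq [IsFiniteMeasure μ] (hci : CondIndepGiven μ F G Y)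
    {k l y : ℕ} (hk : k ∈ ({1, 2} : Set ℕ)) (hl : l ∈ ({1, 2} : Set ℕ))
    (hy : y ∈ ({1, 2} : Set ℕ)) :
    pr μ {ω | F ω = k ∧ G ω = l ∧ Y ω = y} =
      pr μ {ω | F ω = k ∧ Y ω = y} *
        (pr μ {ω | G ω = l ∧ Y ω = y} / pr μ {ω | Y ω = y}) := by
  rcases eq_or_ne (pr μ {ω | Y ω = y}) 0 with h | h
  · rw [h, div_zero, mul_zero]
    exact measureReal_mono_null (fun ω hω => hω.2.2) h
  · have hfactor := hci k l y hk hl hy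
    field_simp at hfactor ⊢
    exact hfactor

lemma CondIndepGiven.caDelta_eq_mul [IsProbabilityMeasure μ] (hY : Measurable Y)
    (hYbin : IsBinaryLabel Y) (hci : CondIndepGiven μ F G Y) :
    caDelta μ F G 1 1 =
      (pr μ {ω | G ω = 1 ∧ Y ω = 1} / pr μ {ω | Y ω = 1} -
        pr μ {ω | G ω = 1 ∧ Y ω = 2} / pr μ {ω | Y ω = 2}) * caDelta μ F Y 1 1 := by
  have h12 : (1 : ℕ) ∈ ({1, 2} : Set ℕ) := by simp
  have h22 : (2 : ℕ) ∈ ({1, 2} : Set ℕ) := by simp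
  have hY2 := pr_eq_two_eq_one_sub μ hY hYbin
  have hF1 := pr_eq_pr_and_add_pr_and μ hY hYbin (fun ω => F ω = 1)
  have hG1 := pr_eq_pr_and_add_pr_and μ hY hYbin (fun ω => G ω = 1)
  rw [pr_and_eq_mul_div μ (fun ω => G ω = 1) Y 1, pr_and_eq_mul_div μ (fun ω => G ω = 1) Y 2]
    at hG1
  have hFG := pr_eq_pr_and_add_pr_and μ hY hYbin (fun ω => F ω = 1 ∧ G ω = 1)
  simp only [and_assoc] at hFG
  rw [hci.pr_and_and_eq h12 h12 h12, hci.pr_and_and_eq h12 h12 h22] at hFG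
  rw [caDelta, caDelta, hFG, hF1, hG1, hY2]
  ring

lemma one_sub_fnr_eq_div [IsFiniteMeasure μ] (hG : Measurable G) (hGbin : IsBinaryLabel G)
    (hY1 : pr μ {ω | Y ω = 1} ≠ 0) :
    1 - fnr μ G Y = pr μ {ω | G ω = 1 ∧ Y ω = 1} / pr μ {ω | Y ω = 1} := by
  have hsplit := pr_eq_pr_and_add_pr_and' μ hG hGbin (fun ω => Y ω = 1)
  rw [fnr, eq_div_iff hY1, sub_mul, div_mul_cancel₀ _ hY1, one_mul]
  linarith

lemma CondIndepGiven.caScore_eq_mul [IsProbabilityMeasure μ] (hF : Measurable F)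
    (hG : Measurable G) (hY : Measurable Y) (hFbin : IsBinaryLabel F) (hGbin : IsBinaryLabel G)
    (hYbin : IsBinaryLabel Y) (hci : CondIndepGiven μ F G Y) :
    caScore μ F G = (1 - fnr μ G Y - fpr μ G Y) * caScore μ F Y := by
  rw [caScore_eq_two_mul_caDelta μ hF hG hFbin hGbin,
    caScore_eq_two_mul_caDelta μ hF hY hFbin hYbin, hci.caDelta_eq_mul hY hYbin]
  rcases eq_or_ne (pr μ {ω | Y ω = 1}) 0 with hY1 | hY1
  · -- both correlations vanish, whatever the (junk) value of `fnr`
    have hΔ : caDelta μ F Y 1 1 = 0 := by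
      rw [caDelta, hY1, mul_zero, sub_zero]
      exact measureReal_mono_null (fun ω hω => hω.2) hY1
    rw [hΔ, mul_zero, mul_zero, mul_zero]
  · rw [one_sub_fnr_eq_div hG hGbin hY1, fpr]
    ring

end ConditionalIndependence

theorem market_closing_with_survey_incentive_compatible_general
    {Ω : Type*} [MeasurableSpace Ω] (μ : Measure Ω) [IsProbabilityMeasure μ]
    (F' Ft Ftm1 Y : Ω → ℕ)
    (hF'meas : Measurable F') (hFtmeas : Measurable Ft)
    (hFtm1meas : Measurable Ftm1) (hYmeas : Measurable Y)
    (hF'bin : IsBinaryLabel F') (hFtbin : IsBinaryLabel Ft)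
    (hFtm1bin : IsBinaryLabel Ftm1) (hYbin : IsBinaryLabel Y)
    (hciT : CondIndepGiven μ Ft F' Y)
    (hciTm1 : CondIndepGiven μ Ftm1 F' Y)
    (hinf : 0 < 1 - fnr μ F' Y - fpr μ F' Y) :
    caScore μ Ft F' - caScore μ Ftm1 F' =
        (1 - fnr μ F' Y - fpr μ F' Y) * (caScore μ Ft Y - caScore μ Ftm1 Y) ∧
      (0 < caScore μ Ft F' - caScore μ Ftm1 F' ↔ caScore μ Ftm1 Y < caScore μ Ft Y) ∧
      (caScore μ Ft F' - caScore μ Ftm1 F' = 0 ↔ caScore μ Ft Y = caScore μ Ftm1 Y) ∧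
      (caScore μ Ft F' - caScore μ Ftm1 F' < 0 ↔ caScore μ Ft Y < caScore μ Ftm1 Y) := by
  have hpayment : caScore μ Ft F' - caScore μ Ftm1 F' =
      (1 - fnr μ F' Y - fpr μ F' Y) * (caScore μ Ft Y - caScore μ Ftm1 Y) := by
    rw [hciT.caScore_eq_mul hFtmeas hF'meas hYmeas hFtbin hF'bin hYbin,
      hciTm1.caScore_eq_mul hFtm1meas hF'meas hYmeas hFtm1bin hF'bin hYbin, mul_sub]
  refine ⟨hpayment, ?_, ?_, ?_⟩ <;> rw [hpayment]
  · rw [mul_pos_iff_of_pos_left hinf, sub_pos]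
  · rw [mul_eq_zero, or_iff_right hinf.ne', sub_eq_zero]
  · rw [← neg_pos, ← mul_neg, mul_pos_iff_of_pos_left hinf, neg_pos, sub_neg]

/-- if the survey hypothesis `F'` is conditionally independent of both
market hypotheses `F_t`, `F_{t−1}` given `Y` and is Bayesian informative, then the
expected market payment satisfies
`S̄(F_t,F') − S̄(F_{t−1},F') = (1 − FNR(F') − FPR(F')) · (S̄(F_t,Y) − S̄(F_{t−1},Y))`;
in particular the payment is positive / zero / negative exactly when the contribution
improves / ties / degrades the expected score measured against the ground truth. -/
theorem market_closing_with_survey_incentive_compatible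
    {Ω : Type*} [MeasurableSpace Ω] (μ : Measure Ω) [IsProbabilityMeasure μ]
    (F' Ft Ftm1 Y : Ω → ℕ)
    (hF'meas : Measurable F') (hFtmeas : Measurable Ft)
    (hFtm1meas : Measurable Ftm1) (hYmeas : Measurable Y)
    (hF'bin : IsBinaryLabel F') (hFtbin : IsBinaryLabel Ft)
    (hFtm1bin : IsBinaryLabel Ftm1) (hYbin : IsBinaryLabel Y)
    (hY1pos : 0 < pr μ {ω | Y ω = 1}) (hY1lt : pr μ {ω | Y ω = 1} < 1)
    (hciT : CondIndepGiven μ Ft F' Y)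
    (hciTm1 : CondIndepGiven μ Ftm1 F' Y)
    (hinf : 0 < 1 - fnr μ F' Y - fpr μ F' Y) :
    caScore μ Ft F' - caScore μ Ftm1 F' =
        (1 - fnr μ F' Y - fpr μ F' Y) * (caScore μ Ft Y - caScore μ Ftm1 Y) ∧
      (0 < caScore μ Ft F' - caScore μ Ftm1 F' ↔ caScore μ Ftm1 Y < caScore μ Ft Y) ∧
      (caScore μ Ft F' - caScore μ Ftm1 F' = 0 ↔ caScore μ Ft Y = caScore μ Ftm1 Y) ∧
      (caScore μ Ft F' - caScore μ Ftm1 F' < 0 ↔ caScore μ Ft Y < caScore μ Ftm1 Y) :=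
  market_closing_with_survey_incentive_compatible_general μ F' Ft Ftm1 Y hF'meas hFtmeas hFtm1meas
    hYmeas hF'bin hFtbin hFtm1bin hYbin hciT hciTm1 hinf
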